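/- arXiv:0811.0961 — 2 statements merged into one kernel-verified Lean document; each statement's English description precedes it below -/
import Mathlib

section
/- In the setting of the proof of the Moduli Theorem, with Φ : D → Hom(H^{d+1}(X,ℤ), ℝ) ≅ ℝ^k defined by Φ(r_1,…,r_k) = Σ_{i=1}^k J_{∂Γ_i(r_i)}, the Jacobian matrix is DΦ = (∂/∂r_i ∫_{Γ_i(r_i)} θ_j)_{i,j=1,…,k}, and there exists an interior point r_0 = (r_{0,1},…,r_{0,k}) ∈ (0,1)^k such that det DΦ(r_0) > 0. -/
/-!
Suppose `det DΦ ≤ 0` on all of `(0,1)^k` and fix `0 < a < b < 1`. The determinant is linear in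
each row, and `t ↦ det(…, J_m(t) - J_m(a), …)` vanishes at `a` with derivative
`det(…, J'_m(t), …)`; so by the mean value theorem the rows `J'_i(s_i)` can be replaced one at a
time by `J_i(b) - J_i(a)` without the determinant becoming positive. Hence
`det(J_i(b) - J_i(a)) ≤ 0`, and letting `a ↓ 0` gives `det(J_i(b)) ≤ 0`, which contradicts
positivity for `b` close to `1`.
-/

open Set Filter Topology

theorem MultilinearMap.map_sub_nonpos_of_map_deriv_nonpos {ι E : Type*} [Fintype ι]
    [DecidableEq ι] [NormedAddCommGroup E] [NormedSpace ℝ E] [FiniteDimensional ℝ E]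
    (D : MultilinearMap ℝ (fun _ : ι => E) ℝ) {f f' : ι → ℝ → E} {a b : ℝ} (hab : a ≤ b)
    (hf : ∀ i, ∀ t ∈ Icc a b, HasDerivAt (f i) (f' i t) t)
    (hD : ∀ s : ι → ℝ, (∀ i, s i ∈ Icc a b) → D (fun i => f' i (s i)) ≤ 0) :
    D (fun i => f i b - f i a) ≤ 0 := by
  suffices key : ∀ S : Finset ι, ∀ s : ι → ℝ, (∀ i, s i ∈ Icc a b) →
      D (S.piecewise (fun i => f i b - f i a) fun i => f' i (s i)) ≤ 0 by
    simpa using key Finset.univ (fun _ => a) fun _ => left_mem_Icc.2 hab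
  intro S
  induction S using Finset.induction_on with
  | empty => simpa using hD
  | insert m S hm ih =>
    intro s hs
    set x := S.piecewise (fun i => f i b - f i a) fun i => f' i (s i)
    let L := LinearMap.toContinuousLinearMap (D.toLinearMap x m)
    have hL : ∀ t ∈ Icc a b, HasDerivAt (fun t => L (f m t - f m a)) (L (f' m t)) t :=
      fun t ht => L.hasFDerivAt.comp_hasDerivAt t ((hf m t ht).sub_const _)
    have hL_nonpos : ∀ t ∈ Icc a b, L (f' m t) ≤ 0 := fun t ht => by
      have hst : ∀ i, Function.update s m t i ∈ Icc a b := fun i => by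
        rcases eq_or_ne i m with rfl | hi <;> simp [*]
      convert ih _ hst using 2
      simp only [L, LinearMap.coe_toContinuousLinearMap', MultilinearMap.toLinearMap_apply, x,
        Finset.update_piecewise_of_notMem _ _ _ hm]
      congr 2
      exact funext fun i => (Function.apply_update f' s m t i).symm
    have hanti : AntitoneOn (fun t => L (f m t - f m a)) (Icc a b) :=
      antitoneOn_of_hasDerivWithinAt_nonpos (convex_Icc a b)
        (fun t ht => (hL t ht).continuousAt.continuousWithinAt)
        (fun t ht => (hL t (interior_subset ht)).hasDerivWithinAt)
        (fun t ht => hL_nonpos t (interior_subset ht))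
    simpa [L, x, Finset.piecewise_insert] using
      hanti (left_mem_Icc.2 hab) (right_mem_Icc.2 hab) hab

theorem hasFDerivAt_sum_comp_eval {ι κ : Type*} [Fintype ι] [DecidableEq ι] [Fintype κ]
    {f : ι → ℝ → κ → ℝ} {v : ι → κ → ℝ} {r : ι → ℝ} (hf : ∀ i, HasDerivAt (f i) (v i) (r i)) :
    HasFDerivAt (fun s : ι → ℝ => ∑ i, f i (s i))
      (LinearMap.toContinuousLinearMap (Matrix.toLin' (Matrix.of fun j i => v i j))) r := by
  have hterm (i : ι) : HasFDerivAt (fun s : ι → ℝ => f i (s i)) _ r :=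
    (hf i).hasFDerivAt.comp r (hasFDerivAt_apply i r)
  refine (HasFDerivAt.fun_sum fun i _ => hterm i).congr_fderiv ?_
  ext w j
  simp [Matrix.mulVec, dotProduct, mul_comm]

theorem posdet_lemma_general
    (k : ℕ)
    (J J' : Fin k → ℝ → (Fin k → ℝ))
    (hderiv : ∀ i, ∀ r ∈ Set.Ioo (0 : ℝ) 1, HasDerivAt (J i) (J' i r) r)
    (hlim : ∀ i, Filter.Tendsto (J i) (nhdsWithin 0 (Set.Ioi 0)) (nhds 0))
    (hdet : ∃ ε > (0 : ℝ), ∀ r : Fin k → ℝ, (∀ i, r i ∈ Set.Ioc (1 - ε) 1) →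
      0 < (Matrix.of fun i j => J i (r i) j).det) :
    -- the Jacobian matrix of Φ(r) = Σ_i J_{∂Γ_i(r_i)} is (∂/∂r_i ∫_{Γ_i(r_i)} θ_j)_{ij}
    (∀ r : Fin k → ℝ, (∀ i, r i ∈ Set.Ioo (0 : ℝ) 1) →
      HasFDerivAt (fun s : Fin k → ℝ => ∑ i, J i (s i))
        (LinearMap.toContinuousLinearMap
          (Matrix.toLin' (Matrix.of fun j i => J' i (r i) j))) r) ∧
    -- there is an interior point where det DΦ > 0
    (∃ r₀ : Fin k → ℝ, (∀ i, r₀ i ∈ Set.Ioo (0 : ℝ) 1) ∧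
      0 < (Matrix.of fun i j => J' i (r₀ i) j).det) := by
  refine ⟨fun r hr => hasFDerivAt_sum_comp_eval fun i => hderiv i (r i) (hr i), ?_⟩
  obtain ⟨ε, hε, hdet⟩ := hdet
  by_contra! hnonpos
  obtain ⟨b, hb, hb1⟩ : ∃ b, max (1 - ε) 0 < b ∧ b < 1 :=
    exists_between (max_lt (by linarith) one_pos)
  have hsub : ∀ a ∈ Ioo 0 b, (Matrix.of fun i => J i b - J i a).det ≤ 0 := fun a ha =>
    Matrix.detRowAlternating.toMultilinearMap.map_sub_nonpos_of_map_deriv_nonpos ha.2.le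
      (fun i t ht => hderiv i t ⟨ha.1.trans_le ht.1, ht.2.trans_lt hb1⟩)
      fun s hs => hnonpos s fun i => ⟨ha.1.trans_le (hs i).1, (hs i).2.trans_lt hb1⟩
  have hlim_det : Tendsto (fun a => (Matrix.of fun i => J i b - J i a).det) (𝓝[>] 0)
      (𝓝 (Matrix.of fun i => J i b).det) :=
    (continuous_id.matrix_det.tendsto _).comp
      (tendsto_pi_nhds.2 fun i => (by simpa using (hlim i).const_sub (J i b) :
        Tendsto (fun a => J i b - J i a) (𝓝[>] 0) (𝓝 (J i b))))
  have hb_nonpos : (Matrix.of fun i => J i b).det ≤ 0 :=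
    le_of_tendsto hlim_det
      (mem_of_superset (Ioo_mem_nhdsGT (hb.trans_le' (le_max_right _ _))) hsub)
  exact not_lt.2 hb_nonpos (hdet (fun _ => b) fun _ => ⟨hb.trans_le' (le_max_left _ _), hb1.le⟩)

/-- **Lemma 6.16 (posdet) of the paper**, in the setting of the proof of the Moduli
Theorem.

`{θ_1, …, θ_k}`, `k = dim H^{d+1}(X, ℝ)`, is an orthonormal basis of the lattice
`𝓗^{d+1}(X, ℤ)`, and `Γ_i(r) = Γ_i ∘ φ_r` are the deformed regular `(d+1)`-simplices.
Here `J i r = J_{∂Γ_i(r)} = (∫_{Γ_i(r)} θ_1, …, ∫_{Γ_i(r)} θ_k)` is the `i`-th Jacobi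
vector, depending only on the single variable `r`, with derivative `J' i r`
(hypotheses: continuity on `[0,1]`, continuous differentiability on `(0,1)`,
`J_{∂Γ_i(r)} → 0` as `r ↓ 0`, and `det (∫_{Γ_i(r_i)} θ_j)_{ij} > 0` for
`r_1, …, r_k ∈ (1−ε, 1]`), and `Φ(r_1, …, r_k) = Σ_i J_{∂Γ_i(r_i)}`.

The lemma: the Jacobian matrix of `Φ` is
`DΦ = (∂/∂r_i ∫_{Γ_i(r_i)} θ_j)_{i,j}` (first conjunct: at every interior point `r`,
`Φ` has total derivative the linear map given by this matrix), and there is an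
interior point `r₀ ∈ (0,1)^k` with `det DΦ(r₀) > 0`. -/
theorem posdet_lemma
    (k : ℕ) (hk : 1 ≤ k)
    (J J' : Fin k → ℝ → (Fin k → ℝ))
    (hcont : ∀ i, ContinuousOn (J i) (Set.Icc 0 1))
    (hderiv : ∀ i, ∀ r ∈ Set.Ioo (0 : ℝ) 1, HasDerivAt (J i) (J' i r) r)
    (hderivCont : ∀ i, ContinuousOn (J' i) (Set.Ioo 0 1))
    (hlim : ∀ i, Filter.Tendsto (J i) (nhdsWithin 0 (Set.Ioi 0)) (nhds 0))
    (hdet : ∃ ε > (0 : ℝ), ∀ r : Fin k → ℝ, (∀ i, r i ∈ Set.Ioc (1 - ε) 1) →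
      0 < (Matrix.of fun i j => J i (r i) j).det) :
    -- the Jacobian matrix of Φ(r) = Σ_i J_{∂Γ_i(r_i)} is (∂/∂r_i ∫_{Γ_i(r_i)} θ_j)_{ij}
    (∀ r : Fin k → ℝ, (∀ i, r i ∈ Set.Ioo (0 : ℝ) 1) →
      HasFDerivAt (fun s : Fin k → ℝ => ∑ i, J i (s i))
        (LinearMap.toContinuousLinearMap
          (Matrix.toLin' (Matrix.of fun j i => J' i (r i) j))) r) ∧
    -- there is an interior point where det DΦ > 0
    (∃ r₀ : Fin k → ℝ, (∀ i, r₀ i ∈ Set.Ioo (0 : ℝ) 1) ∧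
      0 < (Matrix.of fun i j => J' i (r₀ i) j).det) :=
  posdet_lemma_general k J J' hderiv hlim hdet
end

section
/- Let k ≥ 1 and let c_1,…,c_k : [0,1] → ℝ^k be continuous curves, each continuously differentiable on (0,1), such that c_i(r) → 0 as r ↓ 0 for each i, and such that there exists ε > 0 with det M(r_1,…,r_k) > 0 whenever r_1,…,r_k ∈ (1−ε,1], where M(r_1,…,r_k) is the k×k matrix whose i-th row is c_i(r_i). Then there exists r_0 = (r_{0,1},…,r_{0,k}) ∈ (0,1)^k such that the matrix with i-th row c_i′(r_{0,i}) has positive determinant. -/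
/-!
The determinant is linear in each row, so once all rows but the `j`-th are frozen, the
mean value theorem applied to `t ↦ det(…, c_j t, …)` on `[a, b]` lets one replace the row
`c_j b - c_j a` by `(b - a) • c_j' ξ_j` for some `ξ_j ∈ (a, b)` without changing the
determinant. Doing this row by row gives `(b - a)^k det(c_i'(ξ_i)) = det(c_i b - c_i a)`.
On `[0, 1]` the curves vanish at `0` (they are continuous there with limit `0`), so the
right-hand side is `det M(1, …, 1) > 0`.
-/

open Set Filter Topology Matrix

theorem ContinuousLinearMap.exists_apply_smul_deriv_eq_apply_sub {E : Type*}
    [NormedAddCommGroup E] [NormedSpace ℝ E] (L : E →L[ℝ] ℝ) {f : ℝ → E} {a b : ℝ}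
    (hab : a < b) (hfc : ContinuousOn f (Icc a b)) (hfd : DifferentiableOn ℝ f (Ioo a b)) :
    ∃ ξ ∈ Ioo a b, L ((b - a) • deriv f ξ) = L (f b - f a) := by
  have hderiv : ∀ x ∈ Ioo a b, HasDerivAt (L ∘ f) (L (deriv f x)) x := fun x hx =>
    L.hasFDerivAt.comp_hasDerivAt x
      ((hfd x hx).differentiableAt (isOpen_Ioo.mem_nhds hx)).hasDerivAt
  obtain ⟨ξ, hξ, hslope⟩ :=
    exists_hasDerivAt_eq_slope _ _ hab (L.continuous.comp_continuousOn hfc) hderiv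
  refine ⟨ξ, hξ, ?_⟩
  rw [map_smul, map_sub, hslope, smul_eq_mul, mul_div_cancel₀ _ (sub_ne_zero.2 hab.ne')]
  rfl

namespace Matrix

variable {n : Type*} [Fintype n] [DecidableEq n]

noncomputable def detUpdateRowCLM (M : Matrix n n ℝ) (i : n) : (n → ℝ) →L[ℝ] ℝ :=
  LinearMap.toContinuousLinearMap (detRowAlternating.toMultilinearMap.toLinearMap M i)

theorem detUpdateRowCLM_apply (M : Matrix n n ℝ) (i : n) (x : n → ℝ) :
    detUpdateRowCLM M i x = (M.updateRow i x).det := rfl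

variable {c : n → ℝ → n → ℝ} {a b : ℝ}

theorem exists_det_ite_smul_deriv_eq_det_sub (hab : a < b)
    (hcont : ∀ i, ContinuousOn (c i) (Icc a b))
    (hdiff : ∀ i, DifferentiableOn ℝ (c i) (Ioo a b))
    (S : Finset n) :
    ∃ r : n → ℝ, (∀ i, r i ∈ Ioo a b) ∧
      (of fun i => if i ∈ S then (b - a) • deriv (c i) (r i) else c i b - c i a).det =
        (of fun i => c i b - c i a).det := by
  induction S using Finset.induction_on with
  | empty =>
    obtain ⟨m, hm⟩ := exists_between hab
    exact ⟨fun _ => m, fun _ => hm, by simp⟩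
  | insert j S hj ih =>
    obtain ⟨r, hr, hdet⟩ := ih
    set M := of fun i => if i ∈ S then (b - a) • deriv (c i) (r i) else c i b - c i a
    obtain ⟨ξ, hξ, hslope⟩ := (detUpdateRowCLM M j).exists_apply_smul_deriv_eq_apply_sub hab
      (hcont j) (hdiff j)
    refine ⟨Function.update r j ξ, fun i => ?_, ?_⟩
    · rcases eq_or_ne i j with rfl | h
      · simpa using hξ
      · simpa [h] using hr i
    have hMj : M j = c j b - c j a := by ext k; simp [M, hj]
    have hrow : (of fun i => if i ∈ insert j S
        then (b - a) • deriv (c i) (Function.update r j ξ i) else c i b - c i a) =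
        M.updateRow j ((b - a) • deriv (c j) ξ) := by
      ext i k
      rcases eq_or_ne i j with rfl | h
      · simp
      · simp [M, h, updateRow_apply]
    rw [hrow, ← detUpdateRowCLM_apply, hslope, detUpdateRowCLM_apply, ← hMj, updateRow_eq_self,
      hdet]

theorem exists_pow_mul_det_deriv_eq_det_sub (hab : a < b)
    (hcont : ∀ i, ContinuousOn (c i) (Icc a b))
    (hdiff : ∀ i, DifferentiableOn ℝ (c i) (Ioo a b)) :
    ∃ r : n → ℝ, (∀ i, r i ∈ Ioo a b) ∧
      (b - a) ^ Fintype.card n * (of fun i => deriv (c i) (r i)).det =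
        (of fun i => c i b - c i a).det := by
  obtain ⟨r, hr, hdet⟩ := exists_det_ite_smul_deriv_eq_det_sub hab hcont hdiff Finset.univ
  refine ⟨r, hr, ?_⟩
  rw [← det_smul, ← hdet]
  congr 1
  ext i j
  simp

end Matrix

theorem ContinuousWithinAt.eq_of_tendsto_nhdsGT {E : Type*} [TopologicalSpace E] [T2Space E]
    {f : ℝ → E} {a b : ℝ} {l : E} (hab : a < b)
    (hf : ContinuousWithinAt f (Icc a b) a) (hlim : Tendsto f (𝓝[>] a) (𝓝 l)) : f a = l := by
  rw [ContinuousWithinAt, nhdsWithin_Icc_eq_nhdsGE hab] at hf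
  exact tendsto_nhds_unique (hf.mono_left (nhdsWithin_mono _ Ioi_subset_Ici_self)) hlim

theorem posdet_analytic_general
    (k : ℕ)
    (c : Fin k → ℝ → (Fin k → ℝ))
    (hcont : ∀ i, ContinuousOn (c i) (Set.Icc 0 1))
    (hdiff : ∀ i, ContDiffOn ℝ 1 (c i) (Set.Ioo 0 1))
    (hlim : ∀ i, Filter.Tendsto (c i) (nhdsWithin 0 (Set.Ioi 0)) (nhds 0))
    (hdet : ∃ ε > (0 : ℝ), ∀ r : Fin k → ℝ, (∀ i, r i ∈ Set.Ioc (1 - ε) 1) →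
      0 < (Matrix.of fun i j => c i (r i) j).det) :
    ∃ r₀ : Fin k → ℝ, (∀ i, r₀ i ∈ Set.Ioo (0 : ℝ) 1) ∧
      0 < (Matrix.of fun i j => deriv (c i) (r₀ i) j).det := by
  obtain ⟨ε, hε, hpos⟩ := hdet
  have hdet_one : 0 < (of fun i => c i 1).det :=
    hpos (fun _ => 1) fun _ => ⟨by linarith, le_rfl⟩
  have hzero : ∀ i, c i 0 = 0 := fun i =>
    ((hcont i).continuousWithinAt (left_mem_Icc.2 zero_le_one)).eq_of_tendsto_nhdsGT one_pos
      (hlim i)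
  obtain ⟨r, hr, hmean⟩ := exists_pow_mul_det_deriv_eq_det_sub one_pos hcont
    fun i => (hdiff i).differentiableOn one_ne_zero
  refine ⟨r, hr, ?_⟩
  simp only [hzero, sub_zero, one_pow, one_mul] at hmean
  rwa [← hmean] at hdet_one

/-- **The analytic content of Lemma 6.16 (posdet) of the paper.**

Let `k ≥ 1` and let `c_1, …, c_k : [0,1] → ℝ^k` be continuous curves, each
continuously differentiable on `(0,1)`, such that `c_i(r) → 0` as `r ↓ 0` for each
`i`, and such that there exists `ε > 0` with `det M(r_1, …, r_k) > 0` whenever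
`r_1, …, r_k ∈ (1−ε, 1]`, where `M(r_1, …, r_k)` is the `k × k` matrix whose `i`-th
row is `c_i(r_i)`.  Then there exists `r₀ = (r_{0,1}, …, r_{0,k}) ∈ (0,1)^k` such that
the matrix with `i`-th row `c_i'(r_{0,i})` has positive determinant. -/
theorem posdet_analytic
    (k : ℕ) (hk : 1 ≤ k)
    (c : Fin k → ℝ → (Fin k → ℝ))
    (hcont : ∀ i, ContinuousOn (c i) (Set.Icc 0 1))
    (hdiff : ∀ i, ContDiffOn ℝ 1 (c i) (Set.Ioo 0 1))
    (hlim : ∀ i, Filter.Tendsto (c i) (nhdsWithin 0 (Set.Ioi 0)) (nhds 0))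
    (hdet : ∃ ε > (0 : ℝ), ∀ r : Fin k → ℝ, (∀ i, r i ∈ Set.Ioc (1 - ε) 1) →
      0 < (Matrix.of fun i j => c i (r i) j).det) :
    ∃ r₀ : Fin k → ℝ, (∀ i, r₀ i ∈ Set.Ioo (0 : ℝ) 1) ∧
      0 < (Matrix.of fun i j => deriv (c i) (r₀ i) j).det :=
  posdet_analytic_general k c hcont hdiff hlim hdet
end
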